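/- Let λ₁, μ₁, λ₂, μ₂ ∈ ℝ satisfy the Gutiérrez conditions 0 < −λ₂−μ₂ = μ₁ < μ₂ and λ₁+μ₁ > 0. Let χ : ℝ² → {0,1} be any measurable function and set λ(x) := χ(x)λ₁ + (1−χ(x))λ₂ and μ(x) := χ(x)μ₁ + (1−χ(x))μ₂. Then for every continuously differentiable, compactly supported v : ℝ² → ℝ², ∫_{ℝ²} [ λ(x)(div v(x))² + 2μ(x)|e(v)(x)|² ] dx ≥ 0. (In particular the functional coercivity constant Λ(𝕃) of such a two-phase mixture is nonnegative.) -/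

import Mathlib

/-!
Adding the null Lagrangian `4 μ₁ det Dv` to the energy density does not change the energy, since
`∫ det Dv = 0` for compactly supported `C¹` fields: for a `C²` field this is integration by parts
twice together with the symmetry of second derivatives, and the general case follows by
mollifying one component, which approximates its gradient uniformly. After this translation both
phases have a pointwise nonnegative density: with `t = μ₁`,
`λ (tr A)² + 2μ |sym A|² + 4t det A = (λ+μ+t)(tr A)² + (μ-t)((a-d)² + (b+c)²) + t(b-c)²`,
and the Gutiérrez conditions say exactly that all three coefficients are nonnegative in each phase.
-/

open Matrix MeasureTheory

/-- The Jacobian matrix of `v : ℝ² → ℝ²`: `(Dv)_{ij} = ∂v_i/∂x_j`. -/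
noncomputable def jacobian (v : (Fin 2 → ℝ) → (Fin 2 → ℝ)) (x : Fin 2 → ℝ) :
    Matrix (Fin 2) (Fin 2) ℝ :=
  Matrix.of fun i j => fderiv ℝ v x (Pi.single j 1) i

/-- `div v = tr(Dv)`. -/
noncomputable def divg (v : (Fin 2 → ℝ) → (Fin 2 → ℝ)) (x : Fin 2 → ℝ) : ℝ :=
  (jacobian v x).trace

/-- The squared Frobenius norm of the symmetrized gradient `e(v) = (Dv + Dvᵀ)/2`. -/
noncomputable def symGradNormSq (v : (Fin 2 → ℝ) → (Fin 2 → ℝ)) (x : Fin 2 → ℝ) : ℝ :=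
  ∑ i, ∑ j, ((jacobian v x i j + jacobian v x j i) / 2) ^ 2

open ContinuousLinearMap Filter Metric
open scoped Convolution ContDiff Topology

theorem HasCompactSupport.exists_contDiff_norm_fderiv_sub_le {E F : Type*}
    [NormedAddCommGroup E] [NormedSpace ℝ E] [FiniteDimensional ℝ E]
    [NormedAddCommGroup F] [NormedSpace ℝ F] [CompleteSpace F] {g : E → F}
    (hgs : HasCompactSupport g) (hg : ContDiff ℝ 1 g) {ε : ℝ} (hε : 0 < ε) :
    ∃ h : E → F, ContDiff ℝ ∞ h ∧ HasCompactSupport h ∧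
      ∀ x, ‖fderiv ℝ h x - fderiv ℝ g x‖ ≤ ε := by
  borelize E
  have hg' : Continuous (fderiv ℝ g) := hg.continuous_fderiv one_ne_zero
  obtain ⟨δ, hδ, hclose⟩ := Metric.uniformContinuous_iff.mp
    ((hgs.fderiv (𝕜 := ℝ)).uniformContinuous_of_continuous hg') ε hε
  let φ : ContDiffBump (0 : E) := ⟨δ / 2, δ, half_pos hδ, half_lt_self hδ⟩
  let μ : Measure E := .addHaar
  have hφ : LocallyIntegrable (φ.normed μ) μ := φ.continuous_normed.locallyIntegrable
  refine ⟨φ.normed μ ⋆[lsmul ℝ ℝ, μ] g,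
    φ.hasCompactSupport_normed.contDiff_convolution_left _ φ.contDiff_normed
      hg.continuous.locallyIntegrable,
    φ.hasCompactSupport_normed.convolution _ hgs, fun x => ?_⟩
  have hprecomp : (lsmul ℝ ℝ : ℝ →L[ℝ] F →L[ℝ] F).precompR E = lsmul ℝ ℝ := by
    ext; simp
  rw [(hgs.hasFDerivAt_convolution_right _ hφ hg x).fderiv, hprecomp, ← dist_eq_norm]
  exact φ.dist_normed_convolution_le hg'.aestronglyMeasurable
    fun y hy => (hclose (mem_ball.mp hy)).le

theorem norm_apply_mul_apply_sub_apply_mul_apply_le {E : Type*} [SeminormedAddCommGroup E]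
    [NormedSpace ℝ E] (L M : E →L[ℝ] ℝ) (u w : E) :
    ‖L u * M w - L w * M u‖ ≤ 2 * ‖L‖ * ‖M‖ * ‖u‖ * ‖w‖ :=
  calc ‖L u * M w - L w * M u‖ ≤ ‖L u‖ * ‖M w‖ + ‖L w‖ * ‖M u‖ := by
        rw [← norm_mul, ← norm_mul]; exact norm_sub_le _ _
    _ ≤ ‖L‖ * ‖u‖ * (‖M‖ * ‖w‖) + ‖L‖ * ‖w‖ * (‖M‖ * ‖u‖) := by
        gcongr <;> apply le_opNorm
    _ = 2 * ‖L‖ * ‖M‖ * ‖u‖ * ‖w‖ := by ring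

section FDerivWedge

variable {E : Type*} [NormedAddCommGroup E] [NormedSpace ℝ E] {f g : E → ℝ}

noncomputable def fderivWedge (f g : E → ℝ) (u w x : E) : ℝ :=
  fderiv ℝ f x u * fderiv ℝ g x w - fderiv ℝ f x w * fderiv ℝ g x u

theorem norm_fderivWedge_sub_fderivWedge_le (f g k : E → ℝ) (u w x : E) :
    ‖fderivWedge f g u w x - fderivWedge f k u w x‖
      ≤ 2 * ‖fderiv ℝ f x‖ * ‖fderiv ℝ g x - fderiv ℝ k x‖ * ‖u‖ * ‖w‖ := by
  refine le_of_eq_of_le ?_ (norm_apply_mul_apply_sub_apply_mul_apply_le _ _ u w)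
  simp only [fderivWedge, _root_.sub_apply]
  ring_nf

variable [MeasurableSpace E] [BorelSpace E] {μ : Measure E}

theorem HasCompactSupport.integrable_fderiv_apply_mul_fderiv_apply [IsFiniteMeasureOnCompacts μ]
    (hfs : HasCompactSupport f) (hf : ContDiff ℝ 1 f) (hg : ContDiff ℝ 1 g) (u w : E) :
    Integrable (fun x => fderiv ℝ f x u * fderiv ℝ g x w) μ :=
  (((hf.continuous_fderiv one_ne_zero).clm_apply continuous_const).mul
    ((hg.continuous_fderiv one_ne_zero).clm_apply continuous_const)).integrable_of_hasCompactSupport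
    (hfs.fderiv_apply (𝕜 := ℝ) u).mul_right

theorem HasCompactSupport.integrable_fderivWedge [IsFiniteMeasureOnCompacts μ]
    (hfs : HasCompactSupport f) (hf : ContDiff ℝ 1 f) (hg : ContDiff ℝ 1 g) (u w : E) :
    Integrable (fderivWedge f g u w) μ :=
  (hfs.integrable_fderiv_apply_mul_fderiv_apply hf hg u w).sub
    (hfs.integrable_fderiv_apply_mul_fderiv_apply hf hg w u)

variable [FiniteDimensional ℝ E] [μ.IsAddHaarMeasure]

theorem integral_fderiv_mul_fderiv_eq_neg_integral_mul_fderiv_fderiv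
    (hfs : HasCompactSupport f) (hf : ContDiff ℝ 1 f) (hg : ContDiff ℝ 2 g) (u w : E) :
    ∫ x, fderiv ℝ f x u * fderiv ℝ g x w ∂μ = -∫ x, f x * fderiv ℝ (fderiv ℝ g) x u w ∂μ := by
  have hg' : ContDiff ℝ 1 (fderiv ℝ g) := hg.fderiv_right le_rfl
  have hgw : ContDiff ℝ 1 (fderiv ℝ g · w) := hg'.clm_apply contDiff_const
  have hfderiv_gw : ∀ x, fderiv ℝ (fderiv ℝ g · w) x u = fderiv ℝ (fderiv ℝ g) x u w := fun x => by
    rw [fderiv_clm_apply ((hg'.differentiable one_ne_zero) x) (differentiableAt_const w)]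
    simp
  simp_rw [← hfderiv_gw]
  have hibp := integral_mul_fderiv_eq_neg_fderiv_mul_of_integrable (μ := μ) (v := u)
    (hfs.integrable_fderiv_apply_mul_fderiv_apply hf (hg.of_le one_le_two) u w)
    ((hf.continuous.mul ((hgw.continuous_fderiv one_ne_zero).clm_apply
      continuous_const)).integrable_of_hasCompactSupport hfs.mul_right)
    ((hf.continuous.mul hgw.continuous).integrable_of_hasCompactSupport hfs.mul_right)
    (fun x _ => (hf.differentiable one_ne_zero) x) (fun x _ => (hgw.differentiable one_ne_zero) x)
  rw [hibp, neg_neg]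

theorem integral_fderivWedge_eq_zero_of_contDiff_two
    (hfs : HasCompactSupport f) (hf : ContDiff ℝ 1 f) (hg : ContDiff ℝ 2 g) (u w : E) :
    ∫ x, fderivWedge f g u w x ∂μ = 0 := by
  have hg1 : ContDiff ℝ 1 g := hg.of_le one_le_two
  simp only [fderivWedge]
  rw [integral_sub (hfs.integrable_fderiv_apply_mul_fderiv_apply hf hg1 u w)
    (hfs.integrable_fderiv_apply_mul_fderiv_apply hf hg1 w u), sub_eq_zero]
  simp_rw [integral_fderiv_mul_fderiv_eq_neg_integral_mul_fderiv_fderiv hfs hf hg,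
    fun x => (hg.contDiffAt (x := x)).isSymmSndFDerivAt (by simp) u w]

theorem integral_fderivWedge_eq_zero
    (hfs : HasCompactSupport f) (hf : ContDiff ℝ 1 f) (hgs : HasCompactSupport g)
    (hg : ContDiff ℝ 1 g) (u w : E) :
    ∫ x, fderivWedge f g u w x ∂μ = 0 := by
  have hf'_int : Integrable (fun x => ‖fderiv ℝ f x‖) μ :=
    (hf.continuous_fderiv one_ne_zero).norm.integrable_of_hasCompactSupport
      (hfs.fderiv (𝕜 := ℝ)).norm
  let C := 2 * (∫ x, ‖fderiv ℝ f x‖ ∂μ) * ‖u‖ * ‖w‖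
  have hbound : ∀ ε > 0, ‖∫ x, fderivWedge f g u w x ∂μ‖ ≤ ε * C := by
    intro ε hε
    obtain ⟨k, hk, -, hclose⟩ := hgs.exists_contDiff_norm_fderiv_sub_le hg hε
    have hk2 : ContDiff ℝ 2 k := hk.of_le (by norm_cast)
    calc ‖∫ x, fderivWedge f g u w x ∂μ‖
        = ‖∫ x, fderivWedge f g u w x - fderivWedge f k u w x ∂μ‖ := by
          rw [integral_sub (hfs.integrable_fderivWedge hf hg u w)
            (hfs.integrable_fderivWedge hf (hk2.of_le one_le_two) u w),
            integral_fderivWedge_eq_zero_of_contDiff_two hfs hf hk2,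
            sub_zero]
      _ ≤ ∫ x, ‖fderivWedge f g u w x - fderivWedge f k u w x‖ ∂μ :=
          norm_integral_le_integral_norm _
      _ ≤ ∫ x, 2 * ‖fderiv ℝ f x‖ * ε * ‖u‖ * ‖w‖ ∂μ := by
          refine integral_mono_of_nonneg (ae_of_all _ fun x => norm_nonneg _)
            ((((hf'_int.const_mul 2).mul_const ε).mul_const _).mul_const _) (ae_of_all _ fun x => ?_)
          refine (norm_fderivWedge_sub_fderivWedge_le f g k u w x).trans ?_
          beta_reduce
          gcongr
          rw [norm_sub_rev]
          exact hclose x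
      _ = ε * C := by
          simp only [integral_mul_const, integral_const_mul, C]; ring
  have hlim : Tendsto (fun ε => ε * C) (𝓝[>] 0) (𝓝 0) :=
    ((continuous_mul_const C).tendsto' 0 0 (zero_mul C)).mono_left nhdsWithin_le_nhds
  exact norm_le_zero_iff.mp (ge_of_tendsto hlim (eventually_nhdsWithin_of_forall hbound))

end FDerivWedge

noncomputable def lameEnergy (l m : ℝ) (A : Matrix (Fin 2) (Fin 2) ℝ) : ℝ :=
  l * A.trace ^ 2 + 2 * m * ∑ i, ∑ j, ((A i j + A j i) / 2) ^ 2

theorem lameEnergy_add_det_nonneg (A : Matrix (Fin 2) (Fin 2) ℝ) {l m t : ℝ} (ht : 0 ≤ t)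
    (htm : t ≤ m) (hlmt : 0 ≤ l + m + t) : 0 ≤ lameEnergy l m A + 4 * t * A.det := by
  have hsos : lameEnergy l m A + 4 * t * A.det = (l + m + t) * (A 0 0 + A 1 1) ^ 2
      + (m - t) * ((A 0 0 - A 1 1) ^ 2 + (A 0 1 + A 1 0) ^ 2) + t * (A 0 1 - A 1 0) ^ 2 := by
    simp only [lameEnergy, trace_fin_two, det_fin_two, Fin.sum_univ_two]
    ring
  have hmt := sub_nonneg.mpr htm
  rw [hsos]
  positivity

theorem HasCompactSupport.apply {X ι M : Type*} [TopologicalSpace X] [Zero M] {v : X → ι → M}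
    (hv : HasCompactSupport v) (i : ι) : HasCompactSupport (v · i) :=
  hv.comp_left (g := fun y : ι → M => y i) rfl

section Jacobian

variable {v : (Fin 2 → ℝ) → Fin 2 → ℝ}

theorem det_jacobian {x : Fin 2 → ℝ} (hv : DifferentiableAt ℝ v x) :
    (jacobian v x).det = fderivWedge (v · 0) (v · 1) (Pi.single 0 1) (Pi.single 1 1) x := by
  simp [det_fin_two, fderivWedge, jacobian, fderiv_apply hv]

theorem HasCompactSupport.integrable_det_jacobian (hsupp : HasCompactSupport v)
    (hv : ContDiff ℝ 1 v) : Integrable (fun x => (jacobian v x).det) := by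
  simp_rw [det_jacobian ((hv.differentiable one_ne_zero) _)]
  exact (hsupp.apply 0).integrable_fderivWedge
    (contDiff_pi.mp hv 0) (contDiff_pi.mp hv 1) _ _

theorem HasCompactSupport.integral_det_jacobian_eq_zero (hsupp : HasCompactSupport v)
    (hv : ContDiff ℝ 1 v) : ∫ x, (jacobian v x).det = 0 := by
  simp_rw [det_jacobian ((hv.differentiable one_ne_zero) _)]
  exact integral_fderivWedge_eq_zero (hsupp.apply 0) (contDiff_pi.mp hv 0) (hsupp.apply 1)
    (contDiff_pi.mp hv 1) _ _

end Jacobian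

theorem stmt7_general (l1 m1 l2 m2 : ℝ)
    (hpos : 0 < m1) (heq : -l2 - m2 = m1) (hlt : m1 < m2) (hvse : 0 < l1 + m1)
    (χ : (Fin 2 → ℝ) → ℝ) (hχ : ∀ x, χ x = 0 ∨ χ x = 1)
    (v : (Fin 2 → ℝ) → (Fin 2 → ℝ))
    (hv : ContDiff ℝ 1 v) (hsupp : HasCompactSupport v) :
    0 ≤ ∫ x : Fin 2 → ℝ,
      ((χ x * l1 + (1 - χ x) * l2) * (divg v x) ^ 2
        + 2 * (χ x * m1 + (1 - χ x) * m2) * symGradNormSq v x) := by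
  set W : (Fin 2 → ℝ) → ℝ := fun x => (χ x * l1 + (1 - χ x) * l2) * (divg v x) ^ 2
    + 2 * (χ x * m1 + (1 - χ x) * m2) * symGradNormSq v x
  by_cases hW : Integrable W
  swap
  · rw [integral_undef hW]
  have hW_add_det : ∀ x, 0 ≤ W x + 4 * m1 * (jacobian v x).det := fun x => by
    change 0 ≤ lameEnergy (χ x * l1 + (1 - χ x) * l2) (χ x * m1 + (1 - χ x) * m2) (jacobian v x)
      + 4 * m1 * (jacobian v x).det
    rcases hχ x with h | h <;> rw [h] <;>
      exact lameEnergy_add_det_nonneg _ hpos.le (by linarith) (by linarith)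
  calc 0 ≤ ∫ x, W x + 4 * m1 * (jacobian v x).det := integral_nonneg hW_add_det
    _ = ∫ x, W x := by
      rw [integral_add hW ((hsupp.integrable_det_jacobian hv).const_mul _), integral_const_mul,
        hsupp.integral_det_jacobian_eq_zero hv, mul_zero, add_zero]

theorem stmt7 (l1 m1 l2 m2 : ℝ)
    (hpos : 0 < m1) (heq : -l2 - m2 = m1) (hlt : m1 < m2) (hvse : 0 < l1 + m1)
    (χ : (Fin 2 → ℝ) → ℝ) (hχmeas : Measurable χ) (hχ : ∀ x, χ x = 0 ∨ χ x = 1)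
    (v : (Fin 2 → ℝ) → (Fin 2 → ℝ))
    (hv : ContDiff ℝ 1 v) (hsupp : HasCompactSupport v) :
    0 ≤ ∫ x : Fin 2 → ℝ,
      ((χ x * l1 + (1 - χ x) * l2) * (divg v x) ^ 2
        + 2 * (χ x * m1 + (1 - χ x) * m2) * symGradNormSq v x) :=
  stmt7_general l1 m1 l2 m2 hpos heq hlt hvse χ hχ v hv hsupp
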